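/- Let p be an odd prime. Then no prime ℓ with ℓ ≥ 7 divides gcd(S_A(4), 4^p + 1); that is, every prime divisor of gcd(S_A(4), 4^p + 1) equals 5. -/

import Mathlib

/-- The quaternary cyclotomic sequence of period 2p from Kim et al.:
`a 0 = 0`, `a p = 2`; for odd `i ≠ p`, value `0`/`1` according to Legendre symbol `(i/p) = ±1`;
for even `i > 0`, value `2`/`3` according to `((i/2)/p) = ±1`. -/
def seqA (p : ℕ) [Fact p.Prime] (i : ℕ) : ℤ :=
  if i = 0 then 0
  else if i = p then 2
  else if i % 2 = 1 then (if legendreSym p i = 1 then 0 else 1)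
  else if legendreSym p (i / 2) = 1 then 2 else 3

/-- `S_A(4) = Σ_{i=0}^{2p-1} a(i)·4^i`. -/
def SA (p : ℕ) [Fact p.Prime] : ℤ := ∑ i ∈ Finset.range (2 * p), seqA p i * 4 ^ i

/-- The Gauss sum `G_p = Σ_{a=1}^{p-1} (a/p)·4^{2a}`. -/
def Gp (p : ℕ) [Fact p.Prime] : ℤ := ∑ a ∈ Finset.Icc 1 (p - 1), legendreSym p a * 4 ^ (2 * a)

/-!
Let `ℓ ≥ 7` be a prime dividing `S_A(4)` and `4 ^ p + 1`. In `𝔽_ℓ` we have `4 ^ p = -1`, so `16` is a primitive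
`p`-th root of unity and `G_p` is the quadratic Gauss sum at it: `G_p ^ 2 = (-1/p) p`. Splitting
`S_A(4)` into even and odd indices, and pairing the index `i` with `i + p` (same Legendre symbol,
opposite power of `4`), gives `2 S_A(4) = ((2/p) - 1) G_p - 8`. Hence `(2/p) = -1`, `G_p = -4` and
`ℓ ∣ 16 - (-1/p) p`. Since `16` has order `p` modulo `ℓ`, `ℓ ≡ 1 (mod 2p)`, which leaves only
`p ≤ 15`, and these few cases are excluded by computing a gcd. The primes below `7` are `2` and `3`,
which never divide `4 ^ p + 1`.
-/

open Finset

theorem Finset.sum_range_two_mul {M : Type*} [AddCommMonoid M] (n : ℕ) (f : ℕ → M) :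
    ∑ i ∈ range (2 * n), f i = ∑ k ∈ range n, f (2 * k) + ∑ k ∈ range n, f (2 * k + 1) := by
  induction n with
  | zero => simp
  | succ n ih =>
    rw [Nat.mul_succ, sum_range_succ, sum_range_succ, ih, sum_range_succ, sum_range_succ]
    abel

theorem sum_range_two_mul_mul_pow_eq_zero {R : Type*} [CommRing R] {n : ℕ} {ω : R}
    (hω : ω ^ n = -1) {f : ℕ → R} (hf : ∀ i, f (n + i) = f i) :
    ∑ i ∈ range (2 * n), f i * ω ^ i = 0 := by
  simp only [two_mul, sum_range_add, hf, pow_add, hω]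
  simp

theorem ZMod.sum_eq_sum_range {M : Type*} [AddCommMonoid M] (n : ℕ) [NeZero n] (f : ZMod n → M) :
    ∑ x, f x = ∑ k ∈ range n, f k :=
  sum_nbij' ZMod.val Nat.cast (fun x _ => mem_range.mpr x.val_lt) (fun _ _ => mem_univ _)
    (fun x _ => ZMod.natCast_zmod_val x) (fun _ hk => ZMod.val_cast_of_lt (mem_range.mp hk))
    (fun x _ => by rw [ZMod.natCast_zmod_val])

theorem two_mul_add_one_le_of_isPrimitiveRoot {p ℓ : ℕ} [Fact ℓ.Prime] {ζ : ZMod ℓ}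
    (hζ : IsPrimitiveRoot ζ p) (hp : Odd p) (hℓ : ℓ ≠ 2) : 2 * p + 1 ≤ ℓ := by
  have hpℓ : p ∣ ℓ - 1 := hζ.eq_orderOf ▸ ZMod.orderOf_dvd_card_sub_one (hζ.ne_zero hp.pos.ne')
  have hℓ2 := (Fact.out : ℓ.Prime).two_le
  have h2ℓ : 2 ∣ ℓ - 1 := by
    have := Nat.odd_iff.mp ((Fact.out : ℓ.Prime).odd_of_ne_two hℓ); omega
  have := Nat.le_of_dvd (by omega) ((Nat.coprime_two_left.mpr hp).mul_dvd_of_dvd_of_dvd h2ℓ hpℓ)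
  omega

theorem lt_seven_of_dvd_sixteen_sub_of_dvd_four_pow_add_one {p ℓ : ℕ} (hp : Odd p)
    (hℓ : 2 * p + 1 ≤ ℓ) (h16 : (ℓ : ℤ) ∣ 16 - ZMod.χ₄ p * p) (h4 : (ℓ : ℤ) ∣ 4 ^ p + 1) :
    ℓ < 7 := by
  have hχ₄ : ZMod.χ₄ p = if p % 4 = 1 then 1 else -1 := by
    rw [ZMod.χ₄_nat_eq_if_mod_four, if_neg (by rcases hp with ⟨m, rfl⟩; omega)]
  have hp15 : p ≤ 15 := by
    have hne : 16 - ZMod.χ₄ p * p ≠ 0 := by rw [hχ₄]; split_ifs <;> omega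
    have := Nat.le_of_dvd (Int.natAbs_pos.mpr hne) (Int.natAbs_dvd_natAbs.mpr h16)
    rw [hχ₄] at this
    split_ifs at this <;> omega
  have hgcd : ℓ ≤ Int.gcd (16 - ZMod.χ₄ p * p) (4 ^ p + 1) :=
    Nat.le_of_dvd (Int.gcd_pos_of_ne_zero_right _ (by positivity)) (Int.dvd_gcd h16 h4)
  obtain ⟨m, rfl⟩ := hp
  have hm : m ≤ 7 := by omega
  interval_cases m <;> norm_num [hχ₄] at hgcd <;> omega

theorem eq_five_of_prime_dvd_four_pow_add_one {p ℓ : ℕ} (hp : p ≠ 0) (hℓ : ℓ.Prime) (h7 : ℓ < 7)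
    (h : ℓ ∣ 4 ^ p + 1) : ℓ = 5 := by
  have h2 : ¬ 2 ∣ 4 ^ p + 1 := by simp [Nat.dvd_iff_mod_eq_zero, Nat.add_mod, Nat.pow_mod, hp]
  have h3 : ¬ 3 ∣ 4 ^ p + 1 := by simp [Nat.dvd_iff_mod_eq_zero, Nat.add_mod, Nat.pow_mod]
  interval_cases ℓ <;> first | rfl | exact absurd h ‹_› | exact absurd hℓ (by decide)

section
variable (p : ℕ) [Fact p.Prime]

theorem legendreSym_natCast_add_self (i : ℕ) :
    legendreSym p ((p + i : ℕ) : ℤ) = legendreSym p (i : ℤ) := by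
  simp [legendreSym]

theorem two_mul_seqA_two_mul (hp : Odd p) {k : ℕ} (hk : k < p) :
    2 * seqA p (2 * k) = 5 - legendreSym p k - if k = 0 then 5 else 0 := by
  rcases eq_or_ne k 0 with rfl | hk0
  · simp [seqA, legendreSym.at_zero]
  have hne : ((k : ℤ) : ZMod p) ≠ 0 := by
    rw [Int.cast_natCast, Ne, ZMod.natCast_eq_zero_iff]
    exact Nat.not_dvd_of_pos_of_lt (Nat.pos_of_ne_zero hk0) hk
  have hkp : 2 * k ≠ p := by rintro rfl; exact Nat.not_odd_iff_even.mpr (even_two_mul k) hp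
  rcases legendreSym.eq_one_or_neg_one p hne with h | h <;>
    simp [seqA, hk0, hkp, Nat.mul_mod_right, h]

theorem two_mul_seqA_two_mul_add_one {k : ℕ} (hk : k < p) :
    2 * seqA p (2 * k + 1) = 1 - legendreSym p (2 * k + 1) + if 2 * k + 1 = p then 3 else 0 := by
  have hp0 := (Fact.out : p.Prime).ne_zero
  by_cases hkp : 2 * k + 1 = p
  · have h0 : legendreSym p (2 * k + 1) = 0 := by
      have : ((2 * k + 1 : ℕ) : ZMod p) = 0 := by rw [hkp, ZMod.natCast_self]
      rw [legendreSym.eq_zero_iff]; exact_mod_cast this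
    simp [seqA, hkp, h0, hp0]
  have hne : ((2 * k + 1 : ℤ) : ZMod p) ≠ 0 := by
    have : ¬ p ∣ 2 * k + 1 := fun h => hkp (Nat.eq_of_dvd_of_lt_two_mul (by omega) h (by omega))
    rw [← ZMod.natCast_eq_zero_iff] at this
    exact_mod_cast this
  rcases legendreSym.eq_one_or_neg_one p hne with h | h <;>
    simp [seqA, hkp, h, Nat.add_mod]

theorem sum_legendreSym_mul_pow_odd {R : Type*} [CommRing R] {ω : R} (hω : ω ^ p = -1) :
    ∑ k ∈ range p, (legendreSym p (2 * k + 1) : R) * ω ^ (2 * k + 1) =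
      -legendreSym p 2 * ∑ k ∈ range p, (legendreSym p k : R) * (ω ^ 2) ^ k := by
  have h := sum_range_two_mul_mul_pow_eq_zero hω (f := fun i => (legendreSym p i : R))
    (fun i => by rw [legendreSym_natCast_add_self])
  have heven : ∑ k ∈ range p, (legendreSym p (2 * k : ℕ) : R) * ω ^ (2 * k) =
      legendreSym p 2 * ∑ k ∈ range p, (legendreSym p k : R) * (ω ^ 2) ^ k := by
    rw [mul_sum]
    refine sum_congr rfl fun k _ => ?_
    rw [Nat.cast_mul, Nat.cast_ofNat, legendreSym.mul, Int.cast_mul, pow_mul, mul_assoc]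
  rw [sum_range_two_mul] at h
  push_cast at h heven
  linear_combination h - heven

theorem Gp_eq_sum_range : Gp p = ∑ k ∈ range p, legendreSym p k * 16 ^ k := by
  have hp := (Fact.out : p.Prime).one_le
  rw [Gp, range_eq_Ico, sum_eq_sum_Ico_succ_bot (by omega), Nat.cast_zero, legendreSym.at_zero,
    zero_mul, zero_add, ← Ico_add_one_right_eq_Icc, Nat.sub_add_cancel hp]
  refine sum_congr rfl fun k _ => ?_
  rw [pow_mul]; norm_num

theorem two_mul_intCast_SA {R : Type*} [CommRing R] (hp : Odd p) (h4 : (4 : R) ^ p = -1)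
    (hgeom : ∑ k ∈ range p, (16 : R) ^ k = 0) :
    2 * (SA p : R) = ((legendreSym p 2 : R) - 1) * Gp p - 8 := by
  have hp0 : 0 ∈ range p := mem_range.mpr (Fact.out : p.Prime).pos
  have heven : ∑ k ∈ range p, 2 * (seqA p (2 * k) : R) * 4 ^ (2 * k) = - Gp p - 5 := by
    calc ∑ k ∈ range p, 2 * (seqA p (2 * k) : R) * 4 ^ (2 * k)
        = ∑ k ∈ range p, ((5 - legendreSym p k - if k = 0 then 5 else 0 : ℤ) : R) * 16 ^ k :=
          sum_congr rfl fun k hk => by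
            rw [← two_mul_seqA_two_mul p hp (mem_range.mp hk), pow_mul]; norm_num
      _ = 5 * ∑ k ∈ range p, (16 : R) ^ k - Gp p - 5 := by
          simp [Gp_eq_sum_range, sub_mul, ite_mul, sum_sub_distrib, mul_sum, hp0]
      _ = - Gp p - 5 := by rw [hgeom]; ring
  have hodd : ∑ k ∈ range p, 2 * (seqA p (2 * k + 1) : R) * 4 ^ (2 * k + 1) =
      legendreSym p 2 * Gp p - 3 := by
    obtain ⟨m, hm⟩ := hp
    have hmp : m ∈ range p := mem_range.mpr (by omega)
    have hcenter : ∀ k, 2 * k + 1 = p ↔ k = m := fun k => by omega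
    calc ∑ k ∈ range p, 2 * (seqA p (2 * k + 1) : R) * 4 ^ (2 * k + 1)
        = ∑ k ∈ range p, ((1 - legendreSym p (2 * k + 1) + if k = m then 3 else 0 : ℤ) : R) *
            4 ^ (2 * k + 1) :=
          sum_congr rfl fun k hk => by
            simp only [← hcenter]
            rw [← two_mul_seqA_two_mul_add_one p (mem_range.mp hk)]; norm_num
      _ = 4 * ∑ k ∈ range p, (16 : R) ^ k
            - ∑ k ∈ range p, (legendreSym p (2 * k + 1) : R) * 4 ^ (2 * k + 1)
            + 3 * 4 ^ (2 * m + 1) := by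
          have hpow : ∀ k, (4 : R) ^ (2 * k + 1) = 4 * 16 ^ k := fun k => by
            rw [pow_succ, pow_mul]; norm_num; ring
          simp [add_mul, sub_mul, ite_mul, sum_add_distrib, sum_sub_distrib, mul_sum, hmp, hpow]
      _ = legendreSym p 2 * Gp p - 3 := by
          rw [hgeom, sum_legendreSym_mul_pow_odd p h4, ← hm, h4, Gp_eq_sum_range]
          push_cast
          norm_num
          ring
  rw [SA, Int.cast_sum, sum_range_two_mul, mul_add, mul_sum, mul_sum]
  push_cast
  simp only [← mul_assoc, heven, hodd]
  ring

theorem sq_sum_legendreSym_mul_pow {F : Type*} [CommRing F] [IsDomain F] (hp : p ≠ 2)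
    (h2 : (2 : F) ≠ 0) {ζ : F} (hζ : IsPrimitiveRoot ζ p) :
    (∑ k ∈ range p, (legendreSym p k : F) * ζ ^ k) ^ 2 = legendreSym p (-1) * p := by
  have : NeZero p := ⟨(Fact.out : p.Prime).ne_zero⟩
  let χ := (quadraticChar (ZMod p)).ringHomComp (Int.castRingHom F)
  let ψ := AddChar.zmodChar p hζ.pow_eq_one
  have hχ : χ ≠ 1 := by
    obtain ⟨a, ha⟩ := quadraticChar_exists_neg_one (F := ZMod p) (by rwa [ZMod.ringChar_zmod_n])
    intro h
    have ha0 : a ≠ 0 := by rintro rfl; simp at ha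
    have : χ a = 1 := by rw [h, MulChar.one_apply (Ne.isUnit ha0)]
    simp only [χ, MulChar.ringHomComp_apply, ha, map_neg, map_one] at this
    exact h2 (by linear_combination -this)
  have hsum : ∑ k ∈ range p, (legendreSym p k : F) * ζ ^ k = gaussSum χ ψ := by
    rw [gaussSum, ZMod.sum_eq_sum_range]
    refine sum_congr rfl fun k _ => ?_
    simp [χ, ψ, AddChar.zmodChar_apply', legendreSym]
  rw [hsum, gaussSum_sq hχ ((quadraticChar_isQuadratic _).comp _)
    (AddChar.zmodChar_primitive_of_primitive_root p hζ), ZMod.card]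
  simp [χ, legendreSym]

theorem isPrimitiveRoot_sixteen {R : Type*} [CommRing R] (h15 : (15 : R) ≠ 0)
    (h4 : (4 : R) ^ p = -1) : IsPrimitiveRoot (16 : R) p := by
  have h16 : (16 : R) ^ p = 1 := by
    rw [show (16 : R) = 4 ^ 2 by norm_num, ← pow_mul, mul_comm, pow_mul, h4]; norm_num
  rw [IsPrimitiveRoot.iff_orderOf]
  exact orderOf_eq_prime h16 fun h => h15 (by linear_combination h)

theorem lt_seven_of_prime_dvd_SA (hp : Odd p) {ℓ : ℕ} (hℓ : ℓ.Prime)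
    (hS : (ℓ : ℤ) ∣ SA p) (h4 : (ℓ : ℤ) ∣ 4 ^ p + 1) : ℓ < 7 := by
  have := Fact.mk hℓ
  by_contra! h7
  have hp2 : p ≠ 2 := by have := Nat.odd_iff.mp hp; omega
  have hsmall : ∀ n : ℕ, 0 < n → n < ℓ → (n : ZMod ℓ) ≠ 0 := fun n h0 hn => by
    rw [Ne, ZMod.natCast_eq_zero_iff]; exact Nat.not_dvd_of_pos_of_lt h0 hn
  have h2 : (2 : ZMod ℓ) ≠ 0 := by exact_mod_cast hsmall 2 (by norm_num) (by omega)
  have h15 : (15 : ZMod ℓ) ≠ 0 := by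
    rw [show (15 : ZMod ℓ) = (3 : ℕ) * (5 : ℕ) by norm_num]
    exact mul_ne_zero (hsmall 3 (by norm_num) (by omega)) (hsmall 5 (by norm_num) (by omega))
  have h4F : (4 : ZMod ℓ) ^ p = -1 := by
    have := (ZMod.intCast_zmod_eq_zero_iff_dvd _ ℓ).mpr h4
    push_cast at this
    linear_combination this
  have hζ := isPrimitiveRoot_sixteen p h15 h4F
  have hG : ((legendreSym p 2 : ZMod ℓ) - 1) * Gp p = 8 := by
    have := two_mul_intCast_SA p hp h4F (hζ.geom_sum_eq_zero (Fact.out : p.Prime).one_lt)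
    rw [(ZMod.intCast_zmod_eq_zero_iff_dvd _ ℓ).mpr hS] at this
    linear_combination -this
  have hGsq : (Gp p : ZMod ℓ) ^ 2 = legendreSym p (-1) * p := by
    rw [Gp_eq_sum_range]; push_cast; exact sq_sum_legendreSym_mul_pow p hp2 h2 hζ
  have h16 : (ℓ : ℤ) ∣ 16 - ZMod.χ₄ p * p := by
    have h2p : ((2 : ℤ) : ZMod p) ≠ 0 := by
      exact_mod_cast Ring.two_ne_zero (by rwa [ZMod.ringChar_zmod_n])
    rcases legendreSym.eq_one_or_neg_one p h2p with h | h <;> rw [h] at hG <;> push_cast at hG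
    · exact absurd (by linear_combination -hG) (pow_ne_zero 3 h2)
    · have hG4 : (Gp p : ZMod ℓ) = -4 := mul_left_cancel₀ h2 (by linear_combination -hG)
      rw [← legendreSym.at_neg_one hp2, ← ZMod.intCast_zmod_eq_zero_iff_dvd]
      push_cast
      rw [hG4] at hGsq
      linear_combination hGsq
  exact absurd (lt_seven_of_dvd_sixteen_sub_of_dvd_four_pow_add_one hp
    (two_mul_add_one_le_of_isPrimitiveRoot hζ hp (by omega)) h16 h4) (by omega)

end

/-- no prime `ℓ ≥ 7` divides `gcd(S_A(4), 4^p + 1)`; i.e. every prime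
divisor of this gcd equals `5`. -/
theorem stmt8 (p : ℕ) [Fact p.Prime] (hodd : Odd p) :
    (∀ ℓ : ℕ, ℓ.Prime → 7 ≤ ℓ → ¬ ℓ ∣ Int.gcd (SA p) (4 ^ p + 1)) ∧
    (∀ ℓ : ℕ, ℓ.Prime → ℓ ∣ Int.gcd (SA p) (4 ^ p + 1) → ℓ = 5) := by
  have hdvd {ℓ : ℕ} (h : ℓ ∣ Int.gcd (SA p) (4 ^ p + 1)) :
      (ℓ : ℤ) ∣ SA p ∧ (ℓ : ℤ) ∣ 4 ^ p + 1 :=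
    have h' := Int.natCast_dvd_natCast.mpr h
    ⟨h'.trans (Int.gcd_dvd_left _ _), h'.trans (Int.gcd_dvd_right _ _)⟩
  have hlt (ℓ : ℕ) (hℓ : ℓ.Prime) (h : ℓ ∣ Int.gcd (SA p) (4 ^ p + 1)) : ℓ < 7 :=
    lt_seven_of_prime_dvd_SA p hodd hℓ (hdvd h).1 (hdvd h).2
  refine ⟨fun ℓ hℓ h7 h => absurd (hlt ℓ hℓ h) (by omega), fun ℓ hℓ h => ?_⟩
  exact eq_five_of_prime_dvd_four_pow_add_one hodd.pos.ne' hℓ (hlt ℓ hℓ h)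
    (Int.natCast_dvd_natCast.mp (by exact_mod_cast (hdvd h).2))
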